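/- arXiv:math/0602246 — 2 statements merged into one kernel-verified Lean document; each statement's English description precedes it below -/
import Mathlib

section
/- Let e be a nonzero idempotent (e·e = e) in an admissible Poisson algebra P. Then e lies in the center of the associated Lie algebra: {e, x} = 0 for all x in P, and consequently e·x = x·e = e∙x for all x. -/
/-! In characteristic `≠ 2, 3` the admissibility identity makes `∙` commutative and associative
and `{x, ·}` a derivation of `∙`. A derivation `D` kills every idempotent `e` of a commutative
associative product: `D e = D (e ∙ e) = 2 e ∙ D e`, so `e ∙ D e = 2 e ∙ (e ∙ D e) = 2 e ∙ D e = D e`,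
whence `D e = 2 D e` and `D e = 0`. Thus `{x, e} = 0`, i.e. `e` commutes with every `x`. -/

variable {K : Type*} [Field K] {P : Type*} [AddCommGroup P] [Module K P]

/-- The associator of a bilinear multiplication. -/
def assocOf (m : P →ₗ[K] P →ₗ[K] P) (X Y Z : P) : P := m (m X Y) Z - m X (m Y Z)

/-- Admissible Poisson algebra condition:
`3 A(X,Y,Z) = (X·Z)·Y + (Y·Z)·X - (Y·X)·Z - (Z·X)·Y`. -/
def IsAdmissible (m : P →ₗ[K] P →ₗ[K] P) : Prop :=
  ∀ X Y Z : P, (3 : ℤ) • assocOf m X Y Z =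
    m (m X Z) Y + m (m Y Z) X - m (m Y X) Z - m (m Z X) Y

/-- The antisymmetrized bracket `{X,Y} = (X·Y - Y·X)/2`. -/
def brOf (m : P →ₗ[K] P →ₗ[K] P) (X Y : P) : P := (2 : K)⁻¹ • (m X Y - m Y X)

/-- The symmetrized product `X∙Y = (X·Y + Y·X)/2`. -/
def bulOf (m : P →ₗ[K] P →ₗ[K] P) (X Y : P) : P := (2 : K)⁻¹ • (m X Y + m Y X)

theorem eq_zero_of_leibniz_of_mul_self_eq {Q : Type*} [AddCommGroup Q] (mul : Q → Q → Q)
    (D : Q → Q) (mul_add : ∀ a b c, mul a (b + c) = mul a b + mul a c)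
    (mul_comm : ∀ a b, mul a b = mul b a)
    (mul_assoc : ∀ a b c, mul (mul a b) c = mul a (mul b c))
    (leibniz : ∀ a b, D (mul a b) = mul (D a) b + mul a (D b))
    {e : Q} (he : mul e e = e) : D e = 0 := by
  have hDe : D e = mul e (D e) + mul e (D e) := by
    conv_lhs => rw [← he]
    rw [leibniz, mul_comm (D e) e]
  have hfix : mul e (D e) = D e := by
    conv_lhs => rw [hDe, mul_add, ← mul_assoc, he]
    exact hDe.symm
  rw [hfix] at hDe
  exact left_eq_add.mp hDe

section

variable {m : P →ₗ[K] P →ₗ[K] P}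

theorem bulOf_comm (X Y : P) : bulOf m X Y = bulOf m Y X := by
  rw [bulOf, bulOf, add_comm]

theorem bulOf_add_right (X Y Z : P) : bulOf m X (Y + Z) = bulOf m X Y + bulOf m X Z := by
  simp only [bulOf, map_add, LinearMap.add_apply]
  module

theorem bulOf_eq_of_comm (h2 : (2 : K) ≠ 0) {X Y : P} (h : m X Y = m Y X) :
    bulOf m X Y = m X Y := by
  rw [bulOf, ← h, ← two_smul K, smul_smul, inv_mul_cancel₀ h2, one_smul]

theorem brOf_eq_zero_iff (h2 : (2 : K) ≠ 0) {X Y : P} : brOf m X Y = 0 ↔ m X Y = m Y X := by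
  rw [brOf, smul_eq_zero, sub_eq_zero, or_iff_right (inv_ne_zero h2)]

theorem IsAdmissible.bulOf_assoc (hm : IsAdmissible m) (h3 : (3 : K) ≠ 0) (x y z : P) :
    bulOf m (bulOf m x y) z = bulOf m x (bulOf m y z) := by
  simp only [IsAdmissible, assocOf] at hm
  refine smul_right_injective P h3 ?_
  simp only [bulOf, map_smul, map_add, LinearMap.smul_apply, LinearMap.add_apply]
  linear_combination (norm := module)
    (2 : K)⁻¹ ^ 2 • (hm x y z + hm x z y - hm z x y - hm z y x)

theorem IsAdmissible.brOf_bulOf (hm : IsAdmissible m) (h3 : (3 : K) ≠ 0) (x y z : P) :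
    brOf m x (bulOf m y z) = bulOf m (brOf m x y) z + bulOf m y (brOf m x z) := by
  simp only [IsAdmissible, assocOf] at hm
  refine smul_right_injective P h3 ?_
  simp only [brOf, bulOf, map_smul, map_sub, map_add, LinearMap.smul_apply,
    LinearMap.sub_apply, LinearMap.add_apply]
  linear_combination (norm := module)
    (2 : K)⁻¹ ^ 2 • (hm y x z + hm z x y - hm x y z - hm x z y - hm y z x - hm z y x)

end

theorem stmt7_general (h2 : (2 : K) ≠ 0) (h3 : (3 : K) ≠ 0)
    (m : P →ₗ[K] P →ₗ[K] P) (hm : IsAdmissible m)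
    (e : P) (he : m e e = e) :
    ∀ x : P, brOf m e x = 0 ∧ m e x = m x e ∧ m e x = bulOf m e x := by
  intro x
  have hbr : brOf m x e = 0 :=
    eq_zero_of_leibniz_of_mul_self_eq (bulOf m) (brOf m x) bulOf_add_right bulOf_comm
      (hm.bulOf_assoc h3) (hm.brOf_bulOf h3 x) ((bulOf_eq_of_comm h2 rfl).trans he)
  have hcomm : m e x = m x e := ((brOf_eq_zero_iff h2).mp hbr).symm
  exact ⟨(brOf_eq_zero_iff h2).mpr hcomm, hcomm, (bulOf_eq_of_comm h2 hcomm).symm⟩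

/-- a nonzero idempotent `e` of an admissible Poisson algebra lies
in the center of the associated Lie algebra: `{e,x} = 0`, hence
`e·x = x·e = e∙x` for all `x`. -/
theorem stmt7 (h2 : (2 : K) ≠ 0) (h3 : (3 : K) ≠ 0)
    (m : P →ₗ[K] P →ₗ[K] P) (hm : IsAdmissible m)
    (e : P) (he0 : e ≠ 0) (he : m e e = e) :
    ∀ x : P, brOf m e x = 0 ∧ m e x = m x e ∧ m e x = bulOf m e x :=
  stmt7_general h2 h3 m hm e he
end

section
/- If e₁ and e₂ are nonzero orthogonal idempotents of an admissible Poisson algebra P (e₁·e₂ = e₂·e₁ = 0), then P decomposes as a direct sum P = (P¹_{0,0} ∩ P²_{0,0}) ⊕ P¹_{1,1} ⊕ P²_{1,1}, where Pⁱ_{0,0} = {x : eᵢ·x = x·eᵢ = 0} and Pⁱ_{1,1} = {x : eᵢ·x = x·eᵢ = x}. Moreover P¹_{1,1} ⊆ P²_{0,0}. -/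
variable {K : Type*} [Field K] {P : Type*} [AddCommGroup P] [Module K P]

/-!
For an idempotent `e`, write `L` and `R` for left and right multiplication by `e`. Admissibility
at `(e, e, z)`, `(e, z, e)` and `(z, e, e)` gives `(R - L)(R + L) = R - L` and
`(R + L)² = 2(R + L)`; multiplying the first by `R + L` shows `R - L = 2(R - L)`, so `R = L`, and
then `4L² = 4L`, so `L` is an idempotent operator. For orthogonal idempotents `e₁, e₂` the sum
`e₁ + e₂` is idempotent too, hence `L₁, L₂` are anticommuting idempotents, which forces
`L₁L₂ = L₂L₁ = 0`. The decomposition is then `x = (x - L₁x - L₂x) + L₁x + L₂x`.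
-/

theorem eq_zero_of_mul_eq_self_of_mul_self_eq_two_mul {R : Type*} [Ring R] {d s : R}
    (hd : d * s = d) (hs : s * s = 2 * s) : d = 0 := by
  have : d + d = d :=
    calc d + d = d * (2 * s) := by rw [two_mul, mul_add, hd]
      _ = d := by rw [← hs, ← mul_assoc, hd, hd]
  simpa using this

theorem IsIdempotentElem.mul_eq_zero_of_anticommute_of_isUnit_two {R : Type*} [Ring R]
    {a b : R} (h2 : IsUnit (2 : R)) (ha : IsIdempotentElem a) (hab : a * b + b * a = 0) :
    a * b = 0 := by
  have haba : a * b * a = 0 := by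
    have : 2 * (a * b * a) = a * (a * b + b * a) * a := by
      rw [two_mul, mul_add, add_mul, ← mul_assoc, ha.eq, ← mul_assoc a b a, mul_assoc (a * b),
        ha.eq]
    rwa [hab, mul_zero, zero_mul, h2.mul_right_eq_zero] at this
  have : a * (a * b + b * a) = a * b + a * b * a := by
    rw [mul_add, ← mul_assoc, ha.eq, mul_assoc]
  rwa [hab, mul_zero, haba, add_zero, eq_comm] at this

theorem Module.End.existsUnique_eq_add_add_of_orthogonal {R M : Type*} [Semiring R]
    [AddCommGroup M] [Module R M] {p q : Module.End R M} (hp : IsIdempotentElem p)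
    (hq : IsIdempotentElem q) (hpq : p * q = 0) (hqp : q * p = 0) (x : M) :
    ∃! t : M × M × M, (p t.1 = 0 ∧ q t.1 = 0) ∧ p t.2.1 = t.2.1 ∧ q t.2.2 = t.2.2 ∧
      x = t.1 + t.2.1 + t.2.2 := by
  have hp' (y : M) : p (p y) = p y := LinearMap.congr_fun hp.eq y
  have hq' (y : M) : q (q y) = q y := LinearMap.congr_fun hq.eq y
  have hpq' (y : M) : p (q y) = 0 := LinearMap.congr_fun hpq y
  have hqp' (y : M) : q (p y) = 0 := LinearMap.congr_fun hqp y
  refine ⟨(x - p x - q x, p x, q x), ⟨⟨?_, ?_⟩, hp' x, hq' x, by dsimp only; abel⟩, ?_⟩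
  · simp [hp', hpq']
  · simp [hq', hqp']
  · rintro ⟨a, b, c⟩ ⟨⟨hpa, hqa⟩, hb, hc, rfl⟩
    dsimp only at hpa hqa hb hc ⊢
    have hpx : p (a + b + c) = b := by rw [← hc]; simp [hpa, hb, hpq']
    have hqx : q (a + b + c) = c := by rw [← hb]; simp [hqa, hc, hqp']
    rw [hpx, hqx, Prod.mk.injEq, and_iff_left rfl]
    abel

theorem Module.End.isUnit_two (h2 : (2 : K) ≠ 0) : IsUnit (2 : Module.End K P) := by
  simpa only [map_ofNat] using (IsUnit.mk0 _ h2).map (algebraMap K (Module.End K P))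

namespace IsAdmissible

variable {m : P →ₗ[K] P →ₗ[K] P} {e e₁ e₂ : P}

theorem sub_mul_add_eq (hm : IsAdmissible m) (h3 : (3 : K) ≠ 0) (he : m e e = e) :
    (m.flip e - m e) * (m.flip e + m e) = m.flip e - m e := by
  ext z
  have i1 := hm e e z
  have i2 := hm e z e
  have i3 := hm z e e
  simp only [assocOf, he] at i1 i2 i3
  simp only [Module.End.mul_apply, LinearMap.sub_apply, LinearMap.add_apply, map_add,
    LinearMap.flip_apply]
  rw [← smul_right_inj h3]
  linear_combination (norm := module) i1 + i2 + i3

theorem add_mul_self_eq (hm : IsAdmissible m) (h3 : (3 : K) ≠ 0) (he : m e e = e) :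
    (m.flip e + m e) * (m.flip e + m e) = 2 * (m.flip e + m e) := by
  ext z
  have i1 := hm e e z
  have i2 := hm e z e
  have i3 := hm z e e
  simp only [assocOf, he] at i1 i2 i3
  simp only [Module.End.mul_apply, LinearMap.add_apply, map_add, LinearMap.flip_apply, two_mul]
  rw [← smul_right_inj h3]
  linear_combination (norm := module) (2 : ℤ) • i3 - i1 - i2

theorem flip_apply_eq (hm : IsAdmissible m) (h3 : (3 : K) ≠ 0) (he : m e e = e) :
    m.flip e = m e :=
  sub_eq_zero.mp <| eq_zero_of_mul_eq_self_of_mul_self_eq_two_mul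
    (hm.sub_mul_add_eq h3 he) (hm.add_mul_self_eq h3 he)

theorem isIdempotentElem_apply (hm : IsAdmissible m) (h2 : (2 : K) ≠ 0) (h3 : (3 : K) ≠ 0)
    (he : m e e = e) : IsIdempotentElem (m e) := by
  have h := hm.add_mul_self_eq h3 he
  rw [hm.flip_apply_eq h3 he] at h
  have h4 : (2 : Module.End K P) * (2 * (m e * m e)) = 2 * (2 * m e) := by
    rw [← two_mul] at h; rw [← h]; noncomm_ring
  have h2' := Module.End.isUnit_two (P := P) h2
  exact h2'.mul_left_cancel (h2'.mul_left_cancel h4)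

theorem apply_mul_apply_eq_zero (hm : IsAdmissible m) (h2 : (2 : K) ≠ 0) (h3 : (3 : K) ≠ 0)
    (he₁ : m e₁ e₁ = e₁) (he₂ : m e₂ e₂ = e₂) (h₁₂ : m e₁ e₂ = 0) (h₂₁ : m e₂ e₁ = 0) :
    m e₁ * m e₂ = 0 := by
  have hsum : m (e₁ + e₂) (e₁ + e₂) = e₁ + e₂ := by
    simp only [map_add, LinearMap.add_apply, he₁, he₂, h₁₂, h₂₁, add_zero, zero_add]
  have hidem₁ := hm.isIdempotentElem_apply h2 h3 he₁
  have hanti := (hidem₁.add_iff (hm.isIdempotentElem_apply h2 h3 he₂)).mp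
    (map_add m e₁ e₂ ▸ hm.isIdempotentElem_apply h2 h3 hsum)
  exact hidem₁.mul_eq_zero_of_anticommute_of_isUnit_two (Module.End.isUnit_two h2) hanti

end IsAdmissible

theorem stmt11_general (h2 : (2 : K) ≠ 0) (h3 : (3 : K) ≠ 0)
    (m : P →ₗ[K] P →ₗ[K] P) (hm : IsAdmissible m)
    (e₁ e₂ : P)
    (he₁ : m e₁ e₁ = e₁) (he₂ : m e₂ e₂ = e₂)
    (horth : m e₁ e₂ = 0 ∧ m e₂ e₁ = 0) :
    (∀ x : P, ∃! t : P × P × P,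
      (m e₁ t.1 = 0 ∧ m t.1 e₁ = 0 ∧ m e₂ t.1 = 0 ∧ m t.1 e₂ = 0) ∧
      (m e₁ t.2.1 = t.2.1 ∧ m t.2.1 e₁ = t.2.1) ∧
      (m e₂ t.2.2 = t.2.2 ∧ m t.2.2 e₂ = t.2.2) ∧
      x = t.1 + t.2.1 + t.2.2) ∧
    (∀ x : P, m e₁ x = x → m x e₁ = x → m e₂ x = 0 ∧ m x e₂ = 0) := by
  have hflip₁ (x : P) : m x e₁ = m e₁ x := LinearMap.congr_fun (hm.flip_apply_eq h3 he₁) x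
  have hflip₂ (x : P) : m x e₂ = m e₂ x := LinearMap.congr_fun (hm.flip_apply_eq h3 he₂) x
  have h₁₂ := hm.apply_mul_apply_eq_zero h2 h3 he₁ he₂ horth.1 horth.2
  have h₂₁ := hm.apply_mul_apply_eq_zero h2 h3 he₂ he₁ horth.2 horth.1
  simp only [hflip₁, hflip₂, and_self, and_self_left]
  refine ⟨Module.End.existsUnique_eq_add_add_of_orthogonal (hm.isIdempotentElem_apply h2 h3 he₁)
    (hm.isIdempotentElem_apply h2 h3 he₂) h₁₂ h₂₁, fun x hx _ ↦ ?_⟩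
  rw [← hx]
  exact LinearMap.congr_fun h₂₁ x

/-- for nonzero orthogonal idempotents `e₁, e₂` of an admissible
Poisson algebra, `P = (P¹₀₀ ∩ P²₀₀) ⊕ P¹₁₁ ⊕ P²₁₁`, and `P¹₁₁ ⊆ P²₀₀`. -/
theorem stmt11 (h2 : (2 : K) ≠ 0) (h3 : (3 : K) ≠ 0)
    (m : P →ₗ[K] P →ₗ[K] P) (hm : IsAdmissible m)
    (e₁ e₂ : P) (he₁0 : e₁ ≠ 0) (he₂0 : e₂ ≠ 0)
    (he₁ : m e₁ e₁ = e₁) (he₂ : m e₂ e₂ = e₂)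
    (horth : m e₁ e₂ = 0 ∧ m e₂ e₁ = 0) :
    (∀ x : P, ∃! t : P × P × P,
      (m e₁ t.1 = 0 ∧ m t.1 e₁ = 0 ∧ m e₂ t.1 = 0 ∧ m t.1 e₂ = 0) ∧
      (m e₁ t.2.1 = t.2.1 ∧ m t.2.1 e₁ = t.2.1) ∧
      (m e₂ t.2.2 = t.2.2 ∧ m t.2.2 e₂ = t.2.2) ∧
      x = t.1 + t.2.1 + t.2.2) ∧
    (∀ x : P, m e₁ x = x → m x e₁ = x → m e₂ x = 0 ∧ m x e₂ = 0) :=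
  stmt11_general h2 h3 m hm e₁ e₂ he₁ he₂ horth
end
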